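/- Let H be a separable Hilbert space with orthonormal basis {e_j}_{j≥1} ∪ {f_j}_{j≥1}. Let H_N = span{e_j : j ≥ 1} ⊕ span{f_1,…,f_N} (closed). Let U(2∞) = ⋃_{n} U(span{e_1,…,e_n,f_1,…,f_n}) (each extended by the identity on the orthogonal complement), and let 𝒰 = ⋃_N U(H_N) (extended by identity). Then U(2∞) is dense in 𝒰 in the strong operator topology: for every W ∈ 𝒰, vectors ξ_1,…,ξ_k ∈ H, and ε > 0, there exists W' ∈ U(2∞) with ‖Wξ_j − W'ξ_j‖ < ε for all j. -/

import Mathlib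

/-!
Expand each `ξ k` in the Hilbert basis `b = (e, f)` and truncate to a finite set `s` of indices:
it then suffices to approximate the orthonormal family `(W (b j))_{j ∈ s}`. Orthogonalizing
nearby vectors of `span (range b)` one at a time gives a nearby orthonormal family `u` inside
`span {b i | i ∈ t}` for some finite `t ⊇ s`. Completing `u` to an orthonormal basis of that span
and keeping `b i` for `i ∉ t` yields a second Hilbert basis `b'`, and the unitary sending `b` to
`b'` fixes every `b i` with `i ∉ t`.
-/

open Set Submodule
open scoped InnerProductSpace

section Orthonormal

variable {𝕜 E : Type*} [RCLike 𝕜] [NormedAddCommGroup E] [InnerProductSpace 𝕜 E]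

theorem norm_sub_inv_norm_smul_le {x : E} (hx : ‖x‖ = 1) (z : E) :
    ‖x - (‖z‖⁻¹ : 𝕜) • z‖ ≤ 2 * ‖x - z‖ := by
  rcases eq_or_ne z 0 with rfl | hz
  · simp [hx]
  have hzw : ‖z - (‖z‖⁻¹ : 𝕜) • z‖ = |‖z‖ - ‖x‖| := by
    have h : (1 - ‖z‖⁻¹) * ‖z‖ = ‖z‖ - 1 := by field_simp
    nth_rewrite 1 [← one_smul 𝕜 z]
    rw [hx, ← sub_smul, norm_smul, ← RCLike.ofReal_inv, ← RCLike.ofReal_one, ← RCLike.ofReal_sub,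
      RCLike.norm_ofReal, ← h, abs_mul, abs_norm]
  calc ‖x - (‖z‖⁻¹ : 𝕜) • z‖ ≤ ‖x - z‖ + ‖z - (‖z‖⁻¹ : 𝕜) • z‖ :=
        norm_sub_le_norm_sub_add_norm_sub _ _ _
    _ ≤ ‖x - z‖ + ‖x - z‖ := by rw [hzw, norm_sub_rev x]; gcongr; exact abs_norm_sub_norm_le _ _
    _ = 2 * ‖x - z‖ := by ring

variable {κ : Type*} [Fintype κ] {u : κ → E}

theorem Orthonormal.inner_sub_sum_inner_smul (hu : Orthonormal 𝕜 u) (y : E) (i : κ) :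
    ⟪u i, y - ∑ j, ⟪u j, y⟫_𝕜 • u j⟫_𝕜 = 0 := by
  rw [inner_sub_right, hu.inner_right_fintype, sub_self]

theorem Orthonormal.norm_sub_sub_sum_inner_smul_le (hu : Orthonormal 𝕜 u) (x y : E) :
    ‖x - (y - ∑ i, ⟪u i, y⟫_𝕜 • u i)‖ ≤
      (Fintype.card κ + 1) * ‖x - y‖ + ∑ i, ‖⟪u i, x⟫_𝕜‖ := by
  have hcoeff (i : κ) : ‖⟪u i, y⟫_𝕜‖ ≤ ‖⟪u i, x⟫_𝕜‖ + ‖x - y‖ := by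
    calc ‖⟪u i, y⟫_𝕜‖ = ‖⟪u i, x⟫_𝕜 - ⟪u i, x - y⟫_𝕜‖ := by rw [inner_sub_right, sub_sub_cancel]
      _ ≤ ‖⟪u i, x⟫_𝕜‖ + ‖u i‖ * ‖x - y‖ := by
          refine (norm_sub_le _ _).trans ?_
          gcongr
          exact norm_inner_le_norm _ _
      _ = ‖⟪u i, x⟫_𝕜‖ + ‖x - y‖ := by rw [hu.1 i, one_mul]
  calc ‖x - (y - ∑ i, ⟪u i, y⟫_𝕜 • u i)‖ = ‖(x - y) + ∑ i, ⟪u i, y⟫_𝕜 • u i‖ := by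
        rw [sub_sub_eq_add_sub, add_sub_right_comm]
    _ ≤ ‖x - y‖ + ‖∑ i, ⟪u i, y⟫_𝕜 • u i‖ := norm_add_le _ _
    _ ≤ ‖x - y‖ + ∑ i, ‖⟪u i, y⟫_𝕜‖ := by
        gcongr
        exact (norm_sum_le _ _).trans_eq (by simp [norm_smul, hu.1])
    _ ≤ ‖x - y‖ + ∑ i, (‖⟪u i, x⟫_𝕜‖ + ‖x - y‖) := by gcongr with i; exact hcoeff i
    _ = (Fintype.card κ + 1) * ‖x - y‖ + ∑ i, ‖⟪u i, x⟫_𝕜‖ := by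
        rw [Finset.sum_add_distrib, Finset.sum_const, Finset.card_univ, nsmul_eq_mul]; ring

theorem Orthonormal.exists_unit_orthogonal_near (hu : Orthonormal 𝕜 u) {D : Submodule 𝕜 E}
    (huD : ∀ i, u i ∈ D) {x y : E} (hx : ‖x‖ = 1) (hy : y ∈ D) {r : ℝ}
    (hr : (Fintype.card κ + 1) * ‖x - y‖ + ∑ i, ‖⟪u i, x⟫_𝕜‖ ≤ r) (hr₁ : r < 1) :
    ∃ w ∈ D, ‖w‖ = 1 ∧ (∀ i, ⟪w, u i⟫_𝕜 = 0) ∧ ‖x - w‖ ≤ 2 * r := by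
  set z := y - ∑ i, ⟪u i, y⟫_𝕜 • u i
  have hxz : ‖x - z‖ ≤ r := (hu.norm_sub_sub_sum_inner_smul_le x y).trans hr
  have hz : z ≠ 0 := by
    rintro hz
    rw [hz, sub_zero, hx] at hxz
    linarith
  refine ⟨(‖z‖⁻¹ : 𝕜) • z, D.smul_mem _ (D.sub_mem hy (D.sum_mem fun i _ => D.smul_mem _ (huD i))),
    norm_smul_inv_norm hz, fun i => ?_, (norm_sub_inv_norm_smul_le hx z).trans (by linarith)⟩
  rw [inner_smul_left, inner_eq_zero_symm.1 (hu.inner_sub_sum_inner_smul y i), mul_zero]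

theorem Orthonormal.exists_orthonormal_mem_near_fin {D : Submodule 𝕜 E} (hD : Dense (D : Set E)) :
    ∀ {m : ℕ} {x : Fin m → E}, Orthonormal 𝕜 x → ∀ {ε : ℝ}, 0 < ε →
      ∃ u : Fin m → E, Orthonormal 𝕜 u ∧ (∀ i, u i ∈ D) ∧ ∀ i, ‖x i - u i‖ < ε
  | 0, x, _, _, _ => ⟨x, .of_isEmpty x, finZeroElim, finZeroElim⟩
  | m + 1, x, hx, ε, hε => by
    -- `u i` is close to `x i.succ ⊥ x 0`, so the corrections made when orthogonalizing a
    -- vector of `D` close to `x 0` against `u` are small.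
    set r := min (ε / 4) (1 / 2)
    have hr : 0 < r := by positivity
    set η := r / (2 * m + 1)
    have hη : 0 < η := by positivity
    have hηr : η ≤ r := div_le_self hr.le (by linarith [m.cast_nonneg (α := ℝ)])
    obtain ⟨u, hu, huD, hxu⟩ :=
      exists_orthonormal_mem_near_fin hD (hx.comp Fin.succ (Fin.succ_injective m)) hη
    obtain ⟨y, hyD, hxy⟩ := hD.exists_dist_lt (x 0) hη
    have hinner (i : Fin m) : ‖⟪u i, x 0⟫_𝕜‖ ≤ η := by
      rw [← sub_add_cancel (u i) (x i.succ), inner_add_left,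
        hx.inner_eq_zero (Fin.succ_ne_zero i), add_zero]
      exact (norm_inner_le_norm _ _).trans (by rw [hx.1, mul_one, norm_sub_rev]; exact (hxu i).le)
    have hbound : (Fintype.card (Fin m) + 1) * ‖x 0 - y‖ + ∑ i, ‖⟪u i, x 0⟫_𝕜‖ ≤ r := by
      calc _ ≤ (m + 1) * η + m * η := by
            rw [Fintype.card_fin, ← dist_eq_norm]
            gcongr
            exact (Finset.sum_le_sum fun i _ => hinner i).trans (by simp)
        _ = (2 * m + 1) * η := by ring
        _ = r := mul_div_cancel₀ _ (by positivity)
    obtain ⟨w, hwD, hw, hwu, hxw⟩ := hu.exists_unit_orthogonal_near huD (hx.1 0) hyD hbound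
      (by linarith [min_le_right (ε / 4) (1 / 2)])
    refine ⟨Matrix.vecCons w u, orthonormal_vecCons_iff.2 ⟨hw, hwu, hu⟩,
      Fin.forall_fin_succ.2 ⟨hwD, huD⟩, Fin.forall_fin_succ.2 ⟨?_, fun i => ?_⟩⟩
    · simp only [Matrix.cons_val_zero]
      linarith [min_le_left (ε / 4) (1 / 2)]
    · simpa using (hxu i).trans_le (hηr.trans (by linarith [min_le_left (ε / 4) (1 / 2)]))

theorem Orthonormal.exists_orthonormal_mem_near {ι : Type*} [Finite ι] {x : ι → E}
    (hx : Orthonormal 𝕜 x) {D : Submodule 𝕜 E} (hD : Dense (D : Set E)) {ε : ℝ} (hε : 0 < ε) :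
    ∃ u : ι → E, Orthonormal 𝕜 u ∧ (∀ i, u i ∈ D) ∧ ∀ i, ‖x i - u i‖ < ε := by
  obtain ⟨m, ⟨g⟩⟩ := Finite.exists_equiv_fin ι
  obtain ⟨u, hu, huD, hxu⟩ :=
    exists_orthonormal_mem_near_fin hD (hx.comp g.symm g.symm.injective) hε
  exact ⟨u ∘ g, hu.comp g g.injective, fun i => huD _, fun i => by simpa using hxu (g i)⟩

end Orthonormal

theorem Orthonormal.norm_map_sum_inner_smul_le {ι 𝕜 E F : Type*} [RCLike 𝕜]
    [NormedAddCommGroup E] [InnerProductSpace 𝕜 E] [NormedAddCommGroup F] [NormedSpace 𝕜 F]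
    {b : ι → E} (hb : Orthonormal 𝕜 b) (A : E →L[𝕜] F) (x : E) (s : Finset ι) :
    ‖A (∑ j ∈ s, ⟪b j, x⟫_𝕜 • b j)‖ ≤ ‖x‖ * ∑ j ∈ s, ‖A (b j)‖ := by
  rw [map_sum, Finset.mul_sum]
  refine (norm_sum_le _ _).trans (Finset.sum_le_sum fun j _ => ?_)
  rw [map_smul, norm_smul]
  gcongr
  simpa [hb.1 j] using norm_inner_le_norm (𝕜 := 𝕜) (b j) x

theorem Submodule.exists_finset_forall_mem_span_image {R M ι κ : Type*} [Semiring R]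
    [AddCommMonoid M] [Module R M] [Finite κ] {b : ι → M} {v : κ → M}
    (hv : ∀ k, v k ∈ span R (range b)) : ∃ t : Finset ι, ∀ k, v k ∈ span R (b '' t) := by
  classical
  have := Fintype.ofFinite κ
  choose t _ c hc using fun k =>
    (mem_span_image_iff_exists_fun R).1 (by rw [image_univ]; exact hv k)
  refine ⟨Finset.univ.biUnion t, fun k => span_mono (image_mono ?_)
    ((mem_span_image_finset_iff_exists_fun R).2 ⟨c k, hc k⟩)⟩
  exact Finset.coe_subset.2 (Finset.subset_biUnion_of_mem t (Finset.mem_univ k))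

theorem ContinuousLinearMap.norm_sub_apply_le_of_mem_unitary {𝕜 E : Type*} [RCLike 𝕜]
    [NormedAddCommGroup E] [InnerProductSpace 𝕜 E] [CompleteSpace E] {U V : E →L[𝕜] E}
    (hU : U ∈ unitary (E →L[𝕜] E)) (hV : V ∈ unitary (E →L[𝕜] E)) (x y : E) :
    ‖U x - V x‖ ≤ ‖U y - V y‖ + 2 * ‖x - y‖ := by
  calc ‖U x - V x‖ = ‖(U y - V y) + (U (x - y) - V (x - y))‖ := by
        rw [map_sub, map_sub]; abel_nf
    _ ≤ ‖U y - V y‖ + (‖U (x - y)‖ + ‖V (x - y)‖) :=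
        (norm_add_le _ _).trans (add_le_add_right (norm_sub_le _ _) _)
    _ = ‖U y - V y‖ + 2 * ‖x - y‖ := by
        rw [norm_map_of_mem_unitary hU, norm_map_of_mem_unitary hV]; ring

theorem Orthonormal.dite_mem_span_image {ι 𝕜 E : Type*} [RCLike 𝕜] [NormedAddCommGroup E]
    [InnerProductSpace 𝕜 E] {b : ι → E} (hb : Orthonormal 𝕜 b) (t : Finset ι)
    [DecidablePred (· ∈ t)] {c : t → E} (hc : Orthonormal 𝕜 c)
    (hct : ∀ i, c i ∈ span 𝕜 (b '' t)) :
    Orthonormal 𝕜 (fun i => if h : i ∈ t then c ⟨i, h⟩ else b i) := by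
  have hperp (i : t) (j : ι) (hj : j ∉ t) : ⟪c i, b j⟫_𝕜 = 0 := by
    refine (isOrtho_span.2 ?_).inner_eq (hct i) (mem_span_singleton_self (b j))
    rintro _ ⟨k, hk, rfl⟩ _ rfl
    exact hb.inner_eq_zero (ne_of_mem_of_not_mem hk hj)
  refine ⟨fun i => ?_, fun i j hij => ?_⟩
  · by_cases hi : i ∈ t <;> simp [hi, hb.1, hc.1]
  · by_cases hi : i ∈ t <;> by_cases hj : j ∈ t <;> simp only [hi, hj, dite_true, dite_false]
    · exact hc.2 (by simpa using hij)
    · exact hperp _ j hj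
    · exact inner_eq_zero_symm.1 (hperp _ i hi)
    · exact hb.2 hij

namespace HilbertBasis

variable {ι 𝕜 E : Type*} [RCLike 𝕜] [NormedAddCommGroup E] [InnerProductSpace 𝕜 E]
  [CompleteSpace E]

theorem exists_unitary_apply_eq (b b' : HilbertBasis ι 𝕜 E) :
    ∃ V ∈ unitary (E →L[𝕜] E), ∀ i, V (b i) = b' i := by
  classical
  refine ⟨_, (Unitary.linearIsometryEquiv.symm (b.repr.trans b'.repr.symm)).2, fun i => ?_⟩
  simp [b.repr_self, b'.repr_symm_single]

theorem exists_eq_orthonormalBasis_on (b : HilbertBasis ι 𝕜 E) (t : Finset ι)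
    (c : OrthonormalBasis t 𝕜 (span 𝕜 (b '' t))) :
    ∃ b' : HilbertBasis ι 𝕜 E, (∀ i ∉ t, b' i = b i) ∧ ∀ i : t, b' i = c i := by
  classical
  set v : ι → E := fun i => if h : i ∈ t then c ⟨i, h⟩ else b i
  have hv : Orthonormal 𝕜 v := b.orthonormal.dite_mem_span_image t
    (c.orthonormal.comp_linearIsometry (span 𝕜 (b '' t)).subtypeₗᵢ) fun i => (c i).2
  have hspan : span 𝕜 (range b) ≤ span 𝕜 (range v) := by
    refine span_le.2 (range_subset_iff.2 fun i => ?_)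
    by_cases hi : i ∈ t
    · have hcv : range (fun k => (c k : E)) ⊆ range v := fun _ ⟨k, hk⟩ => ⟨k, by simp [v, hk]⟩
      have : span 𝕜 (b '' t) ≤ span 𝕜 (range v) := by
        calc span 𝕜 (b '' t) = (span 𝕜 (range c)).map (span 𝕜 (b '' t)).subtype := by
              rw [← OrthonormalBasis.coe_toBasis, c.toBasis.span_eq, map_subtype_top]
          _ = span 𝕜 (range fun k => (c k : E)) := by rw [map_span, ← range_comp]; rfl
          _ ≤ span 𝕜 (range v) := span_mono hcv
      exact this (subset_span ⟨i, hi, rfl⟩)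
    · exact subset_span ⟨i, by simp [v, hi]⟩
  refine ⟨HilbertBasis.mk hv (b.dense_span ▸ topologicalClosure_mono hspan).ge,
    fun i hi => by simp [v, hi], fun i => by simp [v]⟩

theorem exists_unitary_apply_eq_of_mem_span (b : HilbertBasis ι 𝕜 E) {s t : Finset ι}
    (hst : s ⊆ t) {u : s → E} (hu : Orthonormal 𝕜 u) (hut : ∀ j, u j ∈ span 𝕜 (b '' t)) :
    ∃ V ∈ unitary (E →L[𝕜] E), (∀ i ∉ t, V (b i) = b i) ∧ ∀ j : s, V (b j) = u j := by
  classical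
  have hF : Module.finrank 𝕜 (span 𝕜 (b '' t)) = Fintype.card t := by
    rw [image_eq_range]
    exact finrank_span_eq_card (b.orthonormal.linearIndependent.comp _ Subtype.val_injective)
  set F := span 𝕜 (b '' t)
  have : FiniteDimensional 𝕜 F := .span_of_finite 𝕜 (t.finite_toSet.image b)
  let v : t → F := fun i => if h : (i : ι) ∈ s then ⟨u ⟨i, h⟩, hut _⟩ else 0
  have hv : Orthonormal 𝕜 ({i : t | (i : ι) ∈ s}.domRestrict v) := by
    rw [← F.subtypeₗᵢ.orthonormal_comp_iff]
    convert hu.comp (fun i : {i : t | (i : ι) ∈ s} => (⟨i.1.1, i.2⟩ : s))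
      (fun i j h => by ext; simpa using h) using 1
    ext i
    simp [v, dif_pos (show ((i : t) : ι) ∈ s from i.2)]
  obtain ⟨c, hc⟩ := hv.exists_orthonormalBasis_extension_of_card_eq hF
  obtain ⟨b', hb'out, hb'in⟩ := b.exists_eq_orthonormalBasis_on t c
  obtain ⟨V, hV, hVb⟩ := b.exists_unitary_apply_eq b'
  refine ⟨V, hV, fun i hi => (hVb i).trans (hb'out i hi), fun j => ?_⟩
  rw [hVb, hb'in ⟨j, hst j.2⟩, hc _ j.2]
  simp [v]

theorem exists_unitary_near_on_finset (b : HilbertBasis ι 𝕜 E) {W : E →L[𝕜] E}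
    (hW : W ∈ unitary (E →L[𝕜] E)) (s : Finset ι) {δ : ℝ} (hδ : 0 < δ) :
    ∃ t : Finset ι, ∃ W' ∈ unitary (E →L[𝕜] E),
      (∀ i ∉ t, W' (b i) = b i) ∧ ∑ j ∈ s, ‖W (b j) - W' (b j)‖ < δ := by
  classical
  have hWb : Orthonormal 𝕜 fun j : s => W (b j) :=
    (b.orthonormal.comp _ Subtype.val_injective).comp_linearIsometryEquiv
      (Unitary.linearIsometryEquiv ⟨W, hW⟩)
  set η := δ / (s.card + 1)
  obtain ⟨u, hu, huD, hWu⟩ := hWb.exists_orthonormal_mem_near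
    (dense_iff_topologicalClosure_eq_top.2 b.dense_span) (show 0 < η by positivity)
  obtain ⟨t, ht⟩ := exists_finset_forall_mem_span_image huD
  obtain ⟨W', hW', hfix, hW'u⟩ := b.exists_unitary_apply_eq_of_mem_span
    (Finset.subset_union_left (s₂ := t)) hu fun j =>
      span_mono (image_mono (Finset.coe_subset.2 Finset.subset_union_right)) (ht j)
  refine ⟨s ∪ t, W', hW', hfix, ?_⟩
  calc ∑ j ∈ s, ‖W (b j) - W' (b j)‖ = ∑ j : s, ‖W (b j) - u j‖ := by
        rw [← Finset.sum_coe_sort]; simp [hW'u]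
    _ ≤ ∑ _j : s, η := Finset.sum_le_sum fun j _ => (hWu j).le
    _ = s.card * η := by simp
    _ < δ := by
        rw [mul_div_assoc', div_lt_iff₀ (by positivity)]
        linarith

theorem exists_unitary_near (b : HilbertBasis ι 𝕜 E) {W : E →L[𝕜] E}
    (hW : W ∈ unitary (E →L[𝕜] E)) {κ : Type*} [Fintype κ] (ξ : κ → E) {ε : ℝ} (hε : 0 < ε) :
    ∃ t : Finset ι, ∃ W' ∈ unitary (E →L[𝕜] E),
      (∀ i ∉ t, W' (b i) = b i) ∧ ∀ k, ‖W (ξ k) - W' (ξ k)‖ < ε := by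
  obtain ⟨s, hs⟩ : ∃ s : Finset ι, ∀ k, ‖ξ k - ∑ j ∈ s, ⟪b j, ξ k⟫_𝕜 • b j‖ < ε / 3 := by
    refine (Filter.eventually_all.2 fun k => ?_).exists (f := Filter.atTop)
    simpa [b.repr_apply_apply, dist_eq_norm'] using
      (b.hasSum_repr (ξ k)).eventually (Metric.ball_mem_nhds _ (by positivity : 0 < ε / 3))
  set M := ∑ k, ‖ξ k‖
  obtain ⟨t, W', hW', hfix, hnear⟩ :=
    b.exists_unitary_near_on_finset hW s (show 0 < ε / (3 * (M + 1)) by positivity)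
  refine ⟨t, W', hW', hfix, fun k => ?_⟩
  have hξM : ‖ξ k‖ ≤ M := Finset.single_le_sum (fun k _ => norm_nonneg (ξ k)) (Finset.mem_univ k)
  have hv : ‖(W - W') (∑ j ∈ s, ⟪b j, ξ k⟫_𝕜 • b j)‖ < ε / 3 := by
    calc _ ≤ ‖ξ k‖ * ∑ j ∈ s, ‖(W - W') (b j)‖ :=
          b.orthonormal.norm_map_sum_inner_smul_le _ _ _
      _ ≤ M * (ε / (3 * (M + 1))) := by gcongr; exact hnear.le
      _ < ε / 3 := by
        rw [mul_div_assoc', div_lt_div_iff₀ (by positivity) (by norm_num)]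
        nlinarith
  calc ‖W (ξ k) - W' (ξ k)‖ ≤ ‖(W - W') (∑ j ∈ s, ⟪b j, ξ k⟫_𝕜 • b j)‖
        + 2 * ‖ξ k - ∑ j ∈ s, ⟪b j, ξ k⟫_𝕜 • b j‖ :=
      (W.norm_sub_apply_le_of_mem_unitary hW hW' _ _).trans_eq (by rw [sub_apply])
    _ < ε / 3 + 2 * (ε / 3) := by linarith [hs k]
    _ = ε := by ring

end HilbertBasis

theorem Finset.exists_forall_lt_inl_notMem_and_inr_notMem (t : Finset (ℕ ⊕ ℕ)) :
    ∃ n, ∀ j, n < j → Sum.inl j ∉ t ∧ Sum.inr j ∉ t :=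
  ⟨t.sup (Sum.elim id id), fun _ hj =>
    ⟨fun h => hj.not_ge (t.le_sup (f := Sum.elim id id) h),
      fun h => hj.not_ge (t.le_sup (f := Sum.elim id id) h)⟩⟩

theorem unitary_two_infty_dense_general
    {H : Type*} [NormedAddCommGroup H] [InnerProductSpace ℂ H] [CompleteSpace H]
    (e f : ℕ → H)
    (horth : Orthonormal ℂ (Sum.elim e f : ℕ ⊕ ℕ → H))
    (htotal : (Submodule.span ℂ (Set.range (Sum.elim e f : ℕ ⊕ ℕ → H))).topologicalClosure = ⊤)
    (W : H →L[ℂ] H) (hW : W ∈ unitary (H →L[ℂ] H))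
    (k : ℕ) (ξ : Fin k → H) (ε : ℝ) (hε : 0 < ε) :
    ∃ W' ∈ unitary (H →L[ℂ] H),
      (∃ n : ℕ, ∀ j, n < j → W' (e j) = e j ∧ W' (f j) = f j) ∧
      ∀ i : Fin k, ‖W (ξ i) - W' (ξ i)‖ < ε := by
  let b := HilbertBasis.mk horth htotal.ge
  obtain ⟨t, W', hW', hfix, hnear⟩ := b.exists_unitary_near hW ξ hε
  obtain ⟨n, hn⟩ := t.exists_forall_lt_inl_notMem_and_inr_notMem
  refine ⟨W', hW', ⟨n, fun j hj => ?_⟩, hnear⟩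
  simpa [b] using And.intro (hfix _ (hn j hj).1) (hfix _ (hn j hj).2)

/-- with `H_N = span{e_j : j} ⊕ span{f_1,…,f_N}`, the group
`U(2∞) = ⋃ₙ U(span{e_1,…,e_n,f_1,…,f_n})` is strongly dense in `𝒰 = ⋃_N U(H_N)`
(each unitary extended by the identity off the indicated subspace; an element of `𝒰`
is characterized by fixing `f_j` for all large `j`, and an element of `U(2∞)` by fixing
both `e_j` and `f_j` for all large `j`). -/
theorem unitary_two_infty_dense
    {H : Type*} [NormedAddCommGroup H] [InnerProductSpace ℂ H] [CompleteSpace H]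
    (e f : ℕ → H)
    (horth : Orthonormal ℂ (Sum.elim e f : ℕ ⊕ ℕ → H))
    (htotal : (Submodule.span ℂ (Set.range (Sum.elim e f : ℕ ⊕ ℕ → H))).topologicalClosure = ⊤)
    (W : H →L[ℂ] H) (hW : W ∈ unitary (H →L[ℂ] H))
    (hWfin : ∃ N : ℕ, ∀ j, N < j → W (f j) = f j)
    (k : ℕ) (ξ : Fin k → H) (ε : ℝ) (hε : 0 < ε) :
    ∃ W' ∈ unitary (H →L[ℂ] H),
      (∃ n : ℕ, ∀ j, n < j → W' (e j) = e j ∧ W' (f j) = f j) ∧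
      ∀ i : Fin k, ‖W (ξ i) - W' (ξ i)‖ < ε :=
  unitary_two_infty_dense_general e f horth htotal W hW k ξ ε hε
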